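/- arXiv:1404.7061 — 2 statements merged into one kernel-verified Lean document; each statement's English description precedes it below -/
import Mathlib

section
/- Let 𝔉 ⊆ ℝ^n be a closed convex set and u_1, u_2, ... a sequence of vectors with uniformly bounded norm ‖u_t‖ ≤ R. Define the averages ū_T = (1/T)Σ_{t=1}^T u_t. If for every t ≥ 2 the Blackwell condition (ū_{t−1} − Π_𝔉(ū_{t−1})) · (u_t − Π_𝔉(ū_{t−1})) ≤ 0 holds, where Π_𝔉 is the Euclidean projection onto 𝔉, then the Euclidean distance dist(ū_T, 𝔉) converges to 0 as T → ∞. -/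
open Filter RealInnerProductSpace

/-- Deterministic core of Blackwell's approachability: if a uniformly bounded sequence
`u` satisfies the Blackwell condition with respect to a nearest-point projection `proj`
onto a nonempty closed convex set `F`, then the averages approach `F`. -/
theorem blackwell_approachability
    (n : ℕ) (F : Set (EuclideanSpace ℝ (Fin n)))
    (hFne : F.Nonempty) (hFclosed : IsClosed F) (hFconvex : Convex ℝ F)
    (u : ℕ → EuclideanSpace ℝ (Fin n)) (R : ℝ) (hR : ∀ t, ‖u t‖ ≤ R)
    (proj : EuclideanSpace ℝ (Fin n) → EuclideanSpace ℝ (Fin n))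
    (hproj : ∀ x, proj x ∈ F ∧ ∀ y ∈ F, ‖x - proj x‖ ≤ ‖x - y‖)
    (avg : ℕ → EuclideanSpace ℝ (Fin n))
    (havg : ∀ T, avg T = (T : ℝ)⁻¹ • ∑ t ∈ Finset.range T, u t)
    (hblackwell : ∀ T ≥ 1,
      ⟪avg T - proj (avg T), u T - proj (avg T)⟫ ≤ 0) :
    Tendsto (fun T : ℕ => Metric.infDist (avg T) F) atTop (nhds 0) := by
  obtain ⟨y0, hy0⟩ := hFne
  have hR0 : 0 ≤ R := le_trans (norm_nonneg _) (hR 0)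
  set C : ℝ := 3 * R + ‖y0‖ with hC
  have hC0 : 0 ≤ C := by positivity
  -- infDist equals distance to the projection
  have hdist : ∀ x, Metric.infDist x F = ‖x - proj x‖ := by
    intro x
    refine le_antisymm ?_ ?_
    · simpa [dist_eq_norm] using Metric.infDist_le_dist_of_mem (hproj x).1
    · haveI : Nonempty F := ⟨⟨y0, hy0⟩⟩
      rw [Metric.infDist_eq_iInf]
      apply le_ciInf
      intro y
      simpa [dist_eq_norm] using (hproj x).2 y y.2
  -- the averages are bounded by R
  have havgnorm : ∀ T, ‖avg T‖ ≤ R := by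
    intro T
    rcases Nat.eq_zero_or_pos T with h | h
    · simp [havg, h, hR0]
    · rw [havg, norm_smul]
      have h1 : ‖∑ t ∈ Finset.range T, u t‖ ≤ (T : ℝ) * R :=
        calc ‖∑ t ∈ Finset.range T, u t‖ ≤ ∑ t ∈ Finset.range T, ‖u t‖ := norm_sum_le _ _
          _ ≤ ∑ _t ∈ Finset.range T, R := Finset.sum_le_sum fun i _ => hR i
          _ = (T : ℝ) * R := by simp [mul_comm]
      have hT0 : (0 : ℝ) < (T : ℝ) := by exact_mod_cast h
      calc ‖(T : ℝ)⁻¹‖ * ‖∑ t ∈ Finset.range T, u t‖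
          ≤ (T : ℝ)⁻¹ * ((T : ℝ) * R) := by
            apply mul_le_mul _ h1 (norm_nonneg _) (by positivity)
            rw [Real.norm_eq_abs, abs_of_nonneg (by positivity)]
        _ = R := by field_simp
  -- distance of averages to F is bounded by C
  have hdC : ∀ T, Metric.infDist (avg T) F ≤ C := by
    intro T
    rw [hdist]
    calc ‖avg T - proj (avg T)‖ ≤ ‖avg T - y0‖ := (hproj (avg T)).2 y0 hy0
      _ ≤ ‖avg T‖ + ‖y0‖ := norm_sub_le _ _
      _ ≤ C := by have := havgnorm T; rw [hC]; linarith
  -- bound on ‖u T - proj (avg T)‖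
  have huC : ∀ T, ‖u T - proj (avg T)‖ ≤ C := by
    intro T
    calc ‖u T - proj (avg T)‖
        ≤ ‖u T - avg T‖ + ‖avg T - proj (avg T)‖ := norm_sub_le_norm_sub_add_norm_sub _ _ _
      _ ≤ (‖u T‖ + ‖avg T‖) + ‖avg T - y0‖ := by
          gcongr
          · exact norm_sub_le _ _
          · exact (hproj (avg T)).2 y0 hy0
      _ ≤ (R + R) + (‖avg T‖ + ‖y0‖) := by
          gcongr
          · exact hR T
          · exact havgnorm T
          · exact norm_sub_le _ _
      _ ≤ C := by have := havgnorm T; rw [hC]; linarith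
  -- key induction
  have key : ∀ T : ℕ, 1 ≤ T → ((T : ℝ) * Metric.infDist (avg T) F) ^ 2 ≤ (T : ℝ) * C ^ 2 := by
    intro T hT
    induction T, hT using Nat.le_induction with
    | base =>
      have h1 := hdC 1
      have h0 : 0 ≤ Metric.infDist (avg 1) F := Metric.infDist_nonneg
      simpa using pow_le_pow_left₀ h0 h1 2
    | succ T hT IH =>
      set p := proj (avg T) with hp
      -- (T+1) • avg (T+1) = T • avg T + u T
      have hrec : ((T : ℝ) + 1) • avg (T + 1) = (T : ℝ) • avg T + u T := by
        have hT0 : ((T : ℝ)) ≠ 0 := by positivity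
        have hT1 : ((T : ℝ) + 1) ≠ 0 := by positivity
        rw [havg (T + 1), havg T, Finset.sum_range_succ, smul_smul]
        push_cast
        rw [mul_inv_cancel₀ hT1, one_smul, smul_smul, mul_inv_cancel₀ hT0, one_smul]
      have hid : ((T : ℝ) + 1) • (avg (T + 1) - p) = (T : ℝ) • (avg T - p) + (u T - p) := by
        rw [smul_sub, smul_sub, hrec]
        have : ((T : ℝ) + 1) • p = (T : ℝ) • p + p := by
          rw [add_smul, one_smul]
        rw [this]
        abel
      have hnorm : (((T : ℝ) + 1) * ‖avg (T + 1) - p‖) ^ 2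
          = ((T : ℝ) * ‖avg T - p‖) ^ 2 + 2 * (T : ℝ) * ⟪avg T - p, u T - p⟫
            + ‖u T - p‖ ^ 2 := by
        have h1 : (((T : ℝ) + 1) * ‖avg (T + 1) - p‖) ^ 2
            = ‖((T : ℝ) + 1) • (avg (T + 1) - p)‖ ^ 2 := by
          rw [norm_smul, Real.norm_eq_abs, abs_of_nonneg (by positivity)]
        rw [h1, hid, norm_add_sq_real, norm_smul, real_inner_smul_left,
          Real.norm_eq_abs, abs_of_nonneg (Nat.cast_nonneg T)]
        ring
      have hbw := hblackwell T hT
      have hu := huC T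
      have hdistle : Metric.infDist (avg (T + 1)) F ≤ ‖avg (T + 1) - p‖ := by
        simpa [dist_eq_norm] using Metric.infDist_le_dist_of_mem (hproj (avg T)).1
      have hd0 : 0 ≤ Metric.infDist (avg (T + 1)) F := Metric.infDist_nonneg
      have hle : (((T : ℝ) + 1) * Metric.infDist (avg (T + 1)) F) ^ 2
          ≤ (((T : ℝ) + 1) * ‖avg (T + 1) - p‖) ^ 2 := by
        apply pow_le_pow_left₀ (by positivity)
        gcongr
      have hdT : Metric.infDist (avg T) F = ‖avg T - p‖ := hdist (avg T)
      have huu : ‖u T - p‖ ^ 2 ≤ C ^ 2 := pow_le_pow_left₀ (norm_nonneg _) hu 2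
      have : (((T : ℝ) + 1) * Metric.infDist (avg (T + 1)) F) ^ 2
          ≤ (T : ℝ) * C ^ 2 + C ^ 2 := by
        rw [hdT] at IH
        have hT0 : (0 : ℝ) ≤ (T : ℝ) := Nat.cast_nonneg T
        nlinarith [hle, hnorm, IH]
      calc (((T + 1 : ℕ) : ℝ) * Metric.infDist (avg (T + 1)) F) ^ 2
          = (((T : ℝ) + 1) * Metric.infDist (avg (T + 1)) F) ^ 2 := by push_cast; ring_nf
        _ ≤ (T : ℝ) * C ^ 2 + C ^ 2 := this
        _ = ((T + 1 : ℕ) : ℝ) * C ^ 2 := by push_cast; ring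
  -- convert to d T ≤ √(C² / T)
  have hbound : ∀ T, 1 ≤ T → Metric.infDist (avg T) F ≤ Real.sqrt (C ^ 2 / T) := by
    intro T hT
    have hT0 : (0 : ℝ) < (T : ℝ) := by exact_mod_cast hT
    have h := key T hT
    have hd0 : 0 ≤ Metric.infDist (avg T) F := Metric.infDist_nonneg
    have hsq : (Metric.infDist (avg T) F) ^ 2 ≤ C ^ 2 / T := by
      rw [le_div_iff₀ hT0]
      nlinarith [h]
    calc Metric.infDist (avg T) F = Real.sqrt ((Metric.infDist (avg T) F) ^ 2) := by
          rw [Real.sqrt_sq hd0]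
      _ ≤ Real.sqrt (C ^ 2 / T) := Real.sqrt_le_sqrt hsq
  -- squeeze
  have hlim : Tendsto (fun T : ℕ => Real.sqrt (C ^ 2 / T)) atTop (nhds 0) := by
    have h1 : Tendsto (fun T : ℕ => C ^ 2 / (T : ℝ)) atTop (nhds 0) :=
      tendsto_const_div_atTop_nhds_zero_nat _
    simpa using h1.sqrt
  apply squeeze_zero' (Eventually.of_forall fun T => Metric.infDist_nonneg)
    ?_ hlim
  filter_upwards [eventually_ge_atTop 1] with T hT
  exact hbound T hT
end

section
/- Under the Blackwell condition as above, the squared distance satisfies the recursion dist(ū_T, 𝔉)² ≤ ((T−1)/T)² dist(ū_{T−1}, 𝔉)² + (1/T²)‖u_T − Π_𝔉(ū_{T−1})‖², and consequently dist(ū_T, 𝔉)² ≤ 4R²/T where R bounds ‖u_t − Π_𝔉(ū_{t−1})‖. -/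
open Filter RealInnerProductSpace

/-- Quantitative Blackwell step: under the Blackwell condition, the squared distance of
the running average to `F` obeys the stated recursion, and consequently
`dist(ū_T, F)² ≤ 4R²/T`. -/
theorem blackwell_distance_recursion
    (n : ℕ) (F : Set (EuclideanSpace ℝ (Fin n)))
    (hFne : F.Nonempty) (hFclosed : IsClosed F) (hFconvex : Convex ℝ F)
    (u : ℕ → EuclideanSpace ℝ (Fin n))
    (proj : EuclideanSpace ℝ (Fin n) → EuclideanSpace ℝ (Fin n))
    (hproj : ∀ x, proj x ∈ F ∧ ∀ y ∈ F, ‖x - proj x‖ ≤ ‖x - y‖)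
    (avg : ℕ → EuclideanSpace ℝ (Fin n))
    (havg : ∀ T, avg T = (T : ℝ)⁻¹ • ∑ t ∈ Finset.range T, u t)
    (hblackwell : ∀ T ≥ 1, ⟪avg T - proj (avg T), u T - proj (avg T)⟫ ≤ 0)
    (R : ℝ) (hR : ∀ T, ‖u T - proj (avg T)‖ ≤ R) :
    (∀ T ≥ 2, Metric.infDist (avg T) F ^ 2 ≤
        (((T : ℝ) - 1) / T) ^ 2 * Metric.infDist (avg (T - 1)) F ^ 2 +
        (T : ℝ)⁻¹ ^ 2 * ‖u (T - 1) - proj (avg (T - 1))‖ ^ 2) ∧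
    (∀ T ≥ 1, Metric.infDist (avg T) F ^ 2 ≤ 4 * R ^ 2 / T) := by
  have hdist : ∀ x, Metric.infDist x F = ‖x - proj x‖ := by
    intro x
    refine le_antisymm ?_ ?_
    · rw [← dist_eq_norm]
      exact Metric.infDist_le_dist_of_mem (hproj x).1
    · haveI := hFne.to_subtype
      rw [Metric.infDist_eq_iInf]
      apply le_ciInf
      intro y
      rw [dist_eq_norm]
      exact (hproj x).2 y y.2
  have hle : ∀ x, Metric.infDist x (F : Set (EuclideanSpace ℝ (Fin n))) ≤ ‖x - proj x‖ :=
    fun x => (hdist x).le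
  have key : ∀ T ≥ 2, Metric.infDist (avg T) F ^ 2 ≤
      (((T : ℝ) - 1) / T) ^ 2 * Metric.infDist (avg (T - 1)) F ^ 2 +
      (T : ℝ)⁻¹ ^ 2 * ‖u (T - 1) - proj (avg (T - 1))‖ ^ 2 := by
    intro T hT
    obtain ⟨S, rfl⟩ : ∃ S, T = S + 1 := ⟨T - 1, by omega⟩
    have hS1 : 1 ≤ S := by omega
    have hSne : (S : ℝ) ≠ 0 := Nat.cast_ne_zero.mpr (by omega)
    have hTne : ((S : ℝ) + 1) ≠ 0 := by positivity
    simp only [Nat.add_sub_cancel]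
    set p := proj (avg S) with hp
    have hcomb : avg (S + 1) - p =
        ((S : ℝ) / (S + 1)) • (avg S - p) + ((S : ℝ) + 1)⁻¹ • (u S - p) := by
      rw [havg (S + 1), havg S, Finset.sum_range_succ]
      push_cast
      match_scalars <;> field_simp <;> ring
    have hnorm : ‖avg (S + 1) - p‖ ^ 2 =
        ((S : ℝ) / (S + 1)) ^ 2 * ‖avg S - p‖ ^ 2
        + 2 * (((S : ℝ) / (S + 1)) * ((S : ℝ) + 1)⁻¹) * ⟪avg S - p, u S - p⟫
        + (((S : ℝ) + 1)⁻¹) ^ 2 * ‖u S - p‖ ^ 2 := by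
      rw [hcomb, @norm_add_sq_real]
      simp only [norm_smul, real_inner_smul_left, real_inner_smul_right, Real.norm_eq_abs,
        mul_pow, sq_abs]
      ring
    have hcross : 2 * (((S : ℝ) / (S + 1)) * ((S : ℝ) + 1)⁻¹) * ⟪avg S - p, u S - p⟫ ≤ 0 := by
      have h1 := hblackwell S hS1
      have h2 : 0 ≤ 2 * (((S : ℝ) / (S + 1)) * ((S : ℝ) + 1)⁻¹) := by positivity
      exact mul_nonpos_of_nonneg_of_nonpos h2 h1
    have h3 : Metric.infDist (avg (S + 1)) F ^ 2 ≤ ‖avg (S + 1) - p‖ ^ 2 := by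
      have := hle (avg (S + 1))
      have h4 : Metric.infDist (avg (S + 1)) F ≤ ‖avg (S + 1) - p‖ := by
        rw [← dist_eq_norm]; exact Metric.infDist_le_dist_of_mem (hproj (avg S)).1
      exact pow_le_pow_left₀ (Metric.infDist_nonneg) h4 2
    have hcast : ((S : ℝ) + 1) - 1 = (S : ℝ) := by ring
    push_cast
    rw [hcast, hdist (avg S)]
    calc Metric.infDist (avg (S + 1)) F ^ 2 ≤ ‖avg (S + 1) - p‖ ^ 2 := h3
      _ ≤ ((S : ℝ) / (S + 1)) ^ 2 * ‖avg S - p‖ ^ 2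
          + (((S : ℝ) + 1)⁻¹) ^ 2 * ‖u S - p‖ ^ 2 := by
        rw [hnorm]; linarith
  refine ⟨key, ?_⟩
  have hR0 : 0 ≤ R := le_trans (norm_nonneg _) (hR 0)
  -- main induction: (T)² d_T² ≤ T R²
  have main : ∀ T : ℕ, 1 ≤ T → (T : ℝ) ^ 2 * Metric.infDist (avg T) F ^ 2 ≤ (T : ℝ) * R ^ 2 := by
    intro T hT
    induction T, hT using Nat.le_induction with
    | base =>
      have h1 : avg 1 = u 0 := by rw [havg 1]; simp
      have h2 : Metric.infDist (avg 1) F ≤ R := by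
        have : Metric.infDist (avg 1) F ≤ ‖u 0 - proj (avg 0)‖ := by
          rw [h1, ← dist_eq_norm]
          exact Metric.infDist_le_dist_of_mem (hproj (avg 0)).1
        exact this.trans (hR 0)
      have := pow_le_pow_left₀ Metric.infDist_nonneg h2 2
      simpa using this
    | succ T hT ih =>
      have hk := key (T + 1) (by omega)
      simp only [Nat.add_sub_cancel] at hk
      have hcast : ((T : ℝ) + 1) - 1 = (T : ℝ) := by ring
      push_cast at hk
      rw [hcast] at hk
      have hTpos : (0 : ℝ) < (T : ℝ) + 1 := by positivity
      have huR : ‖u T - proj (avg T)‖ ^ 2 ≤ R ^ 2 :=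
        pow_le_pow_left₀ (norm_nonneg _) (hR T) 2
      have h5 : ((T : ℝ) + 1) ^ 2 * Metric.infDist (avg (T + 1)) F ^ 2 ≤
          (T : ℝ) ^ 2 * Metric.infDist (avg T) F ^ 2 + ‖u T - proj (avg T)‖ ^ 2 := by
        have := mul_le_mul_of_nonneg_left hk (le_of_lt (by positivity : (0:ℝ) < ((T:ℝ)+1)^2))
        calc ((T : ℝ) + 1) ^ 2 * Metric.infDist (avg (T + 1)) F ^ 2 ≤ _ := this
          _ = (T : ℝ) ^ 2 * Metric.infDist (avg T) F ^ 2 + ‖u T - proj (avg T)‖ ^ 2 := by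
            field_simp
      push_cast
      calc ((T : ℝ) + 1) ^ 2 * Metric.infDist (avg (T + 1)) F ^ 2
          ≤ (T : ℝ) ^ 2 * Metric.infDist (avg T) F ^ 2 + ‖u T - proj (avg T)‖ ^ 2 := h5
        _ ≤ (T : ℝ) * R ^ 2 + R ^ 2 := by push_cast at ih; linarith
        _ = ((T : ℝ) + 1) * R ^ 2 := by ring
  intro T hT
  have hTpos : (0 : ℝ) < T := by exact_mod_cast hT
  have hm := main T hT
  have h6 : Metric.infDist (avg T) F ^ 2 ≤ R ^ 2 / T := by
    rw [le_div_iff₀ hTpos]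
    nlinarith [Metric.infDist_nonneg (x := avg T) (s := F)]
  calc Metric.infDist (avg T) F ^ 2 ≤ R ^ 2 / T := h6
    _ ≤ 4 * R ^ 2 / T := by
      rw [div_le_div_iff₀ hTpos hTpos]
      nlinarith
end
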